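/- Let C be a class of algebras closed under homomorphic images. If C has definable principal subcongruences (DPSC), then C has finitely determined syntactic congruences (FDSC). -/
import Mathlib

open FirstOrder FirstOrder.Language
universe u

def translation {L : Language} {A : Type u} [L.Structure A]
    (t : L.Term (ℕ ⊕ Fin 1)) (e : ℕ → A) (a : A) : A :=
  t.realize (Sum.elim e fun _ => a)

def relSub {L : Language} {A : Type u} [L.Structure A]
    (F : Set (L.Term (ℕ ⊕ Fin 1))) (θ : A → A → Prop) (a b : A) : Prop :=
  ∀ t ∈ F, ∀ e : ℕ → A, θ (translation t e a) (translation t e b)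

def synRel (L : Language) {A : Type u} [L.Structure A] (θ : A → A → Prop) (a b : A) : Prop :=
  ∀ (t : L.Term (ℕ ⊕ Fin 1)) (e : ℕ → A), θ (translation t e a) (translation t e b)

def IsCongruence (L : Language) (A : Type u) [L.Structure A] (r : A → A → Prop) : Prop :=
  Equivalence r ∧ ∀ {n : ℕ} (f : L.Functions n) (x y : Fin n → A),
    (∀ i, r (x i) (y i)) → r (Structure.funMap f x) (Structure.funMap f y)

def prinCon (L : Language) {A : Type u} [L.Structure A] (a b c d : A) : Prop :=
  ∀ r : A → A → Prop, IsCongruence L A r → r a b → r c d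

def chainSat {L : Language} {A : Type u} [L.Structure A] (n : ℕ)
    (ts : Fin (n + 1) → L.Term (ℕ ⊕ Fin 1)) (zb : Fin (n + 1) → Bool)
    (e : ℕ → A) (c d a b : A) : Prop :=
  (c = translation (ts 0) e (if zb 0 then b else a)) ∧
  (∀ i : Fin n,
      translation (ts i.castSucc) e (if zb i.castSucc then a else b) =
        translation (ts i.succ) e (if zb i.succ then b else a)) ∧
  translation (ts (Fin.last n)) e (if zb (Fin.last n) then a else b) = d

def thetaSup {L : Language} {A : Type u} [L.Structure A]
    (F : Set (L.Term (ℕ ⊕ Fin 1))) (a b c d : A) : Prop :=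
  ∃ (n : ℕ) (ts : Fin (n + 1) → L.Term (ℕ ⊕ Fin 1)) (zb : Fin (n + 1) → Bool) (e : ℕ → A),
    (∀ i, ts i ∈ F) ∧ chainSat n ts zb e c d a b

structure CongFormula (L : Language) where
  n : ℕ
  ts : Fin (n + 1) → L.Term (ℕ ⊕ Fin 1)
  zb : Fin (n + 1) → Bool

def CongFormula.Sat {L : Language} {A : Type u} [L.Structure A]
    (π : CongFormula L) (c d a b : A) : Prop :=
  ∃ e : ℕ → A, chainSat π.n π.ts π.zb e c d a b

def CongFormula.terms {L : Language} (π : CongFormula L) : Set (L.Term (ℕ ⊕ Fin 1)) :=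
  Set.range π.ts

def compTerm {L : Language} (s t : L.Term (ℕ ⊕ Fin 1)) : L.Term (ℕ ⊕ Fin 1) :=
  s.subst fun v => match v with
    | Sum.inl n => Term.var (Sum.inl (2 * n))
    | Sum.inr _ => t.relabel (Sum.map (fun n => 2 * n + 1) id)

section Aux
variable {L : Language} {A : Type u} [L.Structure A]

lemma translation_compTerm (s t : L.Term (ℕ ⊕ Fin 1)) (e : ℕ → A) (a : A) :
    translation (compTerm s t) e a =
      translation s (fun n => e (2 * n)) (translation t (fun n => e (2 * n + 1)) a) := by
  simp only [translation, compTerm, Term.realize_subst]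
  congr 1
  funext v
  cases v with
  | inl n => rfl
  | inr i =>
      simp only [Term.realize_relabel, Sum.elim_inr]
      congr 1
      funext w
      cases w <;> rfl

lemma comp_env (s t : L.Term (ℕ ⊕ Fin 1)) (e1 e2 : ℕ → A) :
    ∃ e : ℕ → A, ∀ a : A,
      translation (compTerm s t) e a = translation s e1 (translation t e2 a) := by
  refine ⟨fun n => if n % 2 = 0 then e1 (n / 2) else e2 (n / 2), fun a => ?_⟩
  rw [translation_compTerm]
  have h1 : (fun n => (fun n => if n % 2 = 0 then e1 (n / 2) else e2 (n / 2)) (2 * n)) = e1 := by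
    funext n
    have h : (2 * n) % 2 = 0 := by omega
    simp only [h, if_pos]
    congr 1
    omega
  have h2 : (fun n => (fun n => if n % 2 = 0 then e1 (n / 2) else e2 (n / 2)) (2 * n + 1)) = e2 := by
    funext n
    have h : ¬ (2 * n + 1) % 2 = 0 := by omega
    simp only [h, if_neg, if_false]
    congr 1
    omega
  rw [h1, h2]

variable {θ : A → A → Prop}

lemma synRel_le (h : synRel L θ a b) : θ a b :=
  h (Term.var (Sum.inr 0)) (fun _ => a)

lemma synRel_equiv (hθ : Equivalence θ) : Equivalence (synRel L θ) :=
  ⟨fun _ _ _ => hθ.refl _, fun h t e => hθ.symm (h t e),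
    fun h1 h2 t e => hθ.trans (h1 t e) (h2 t e)⟩

lemma synRel_translation {x y : A} (h : synRel L θ x y) (t : L.Term (ℕ ⊕ Fin 1)) (e : ℕ → A) :
    synRel L θ (translation t e x) (translation t e y) := by
  intro s e'
  obtain ⟨ee, hee⟩ := comp_env s t e' e
  rw [← hee x, ← hee y]
  exact h _ _

def fTerm {n : ℕ} (f : L.Functions n) (i : Fin n) : L.Term (ℕ ⊕ Fin 1) :=
  Term.func f (fun j => if j = i then Term.var (Sum.inr 0) else Term.var (Sum.inl (j : ℕ)))

lemma translation_fTerm {n : ℕ} (f : L.Functions n) (i : Fin n) (e : ℕ → A) (a : A) :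
    translation (fTerm f i) e a = Structure.funMap f (fun j => if j = i then a else e (j : ℕ)) := by
  simp only [translation, fTerm, Term.realize_func]
  congr 1
  funext j
  by_cases h : j = i <;> simp [h, Term.realize]

lemma synRel_funMap (hθ : Equivalence θ) {n : ℕ} (f : L.Functions n) (x y : Fin n → A)
    (h : ∀ i, synRel L θ (x i) (y i)) :
    synRel L θ (Structure.funMap f x) (Structure.funMap f y) := by
  have key : ∀ k : ℕ, k ≤ n → synRel L θ (Structure.funMap f x)
      (Structure.funMap f (fun j => if (j : ℕ) < k then y j else x j)) := by
    intro k
    induction k with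
    | zero =>
        intro _
        have hx : (fun j : Fin n => if (j : ℕ) < 0 then y j else x j) = x := by
          funext j; simp
        rw [hx]
        exact (synRel_equiv hθ).refl _
    | succ k ih =>
        intro hk
        have hk' : k < n := hk
        refine (synRel_equiv hθ).trans (ih (le_of_lt hk')) ?_
        set e : ℕ → A := fun m =>
          if hm : m < n then (if m < k then y ⟨m, hm⟩ else x ⟨m, hm⟩) else x ⟨k, hk'⟩ with he
        have h1 : Structure.funMap f (fun j => if (j : ℕ) < k then y j else x j)
            = translation (fTerm f ⟨k, hk'⟩) e (x ⟨k, hk'⟩) := by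
          rw [translation_fTerm]
          congr 1
          funext j
          by_cases hj : j = ⟨k, hk'⟩
          · subst hj
            simp
          · have hjn : (j : ℕ) < n := j.isLt
            simp only [hj, if_neg, if_false, he, hjn, dif_pos]
        have h2 : Structure.funMap f (fun j => if (j : ℕ) < k + 1 then y j else x j)
            = translation (fTerm f ⟨k, hk'⟩) e (y ⟨k, hk'⟩) := by
          rw [translation_fTerm]
          congr 1
          funext j
          by_cases hj : j = ⟨k, hk'⟩
          · subst hj
            simp
          · have hjn : (j : ℕ) < n := j.isLt
            have hjk : (j : ℕ) ≠ k := fun hc => hj (Fin.ext hc)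
            have : (j : ℕ) < k + 1 ↔ (j : ℕ) < k := by omega
            simp only [hj, if_neg, if_false, he, hjn, dif_pos, this]
        rw [h1, h2]
        exact synRel_translation (h ⟨k, hk'⟩) _ _
  have hfin := key n le_rfl
  have hy : (fun j : Fin n => if (j : ℕ) < n then y j else x j) = y := by
    funext j; simp [j.isLt]
  rwa [hy] at hfin

lemma con_translation {r : A → A → Prop} (hr : IsCongruence L A r)
    (t : L.Term (ℕ ⊕ Fin 1)) (e : ℕ → A) {x y : A} (h : r x y) :
    r (translation t e x) (translation t e y) := by
  simp only [translation]
  induction t with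
  | var v =>
      cases v with
      | inl n => exact hr.1.refl _
      | inr i => exact h
  | func f ts ih => exact hr.2 f _ _ fun i => ih i

end Aux

section Chain

lemma chainSat_rel {L : Language} {M : Type u} [L.Structure M] {n : ℕ}
    {ts : Fin (n + 1) → L.Term (ℕ ⊕ Fin 1)} {zb : Fin (n + 1) → Bool} {e : ℕ → M} {c d a b : M}
    (h : chainSat n ts zb e c d a b) {r : M → M → Prop} (hr : Equivalence r)
    (hs : ∀ i, r (translation (ts i) e a) (translation (ts i) e b)) : r c d := by
  obtain ⟨h0, hmid, hlast⟩ := h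
  have key : ∀ i : Fin (n + 1), r c (translation (ts i) e (if zb i then a else b)) := by
    intro i
    induction i using Fin.induction with
    | zero =>
        rw [h0]
        cases hzb : zb 0 <;> simp only [hzb, if_true, if_false, Bool.false_eq_true]
        · exact hs 0
        · exact hr.symm (hs 0)
    | succ i ih =>
        have hm := hmid i
        have step : r (translation (ts i.succ) e (if zb i.succ then b else a))
            (translation (ts i.succ) e (if zb i.succ then a else b)) := by
          cases hzb : zb i.succ <;> simp only [hzb, if_true, if_false, Bool.false_eq_true]
          · exact hs _
          · exact hr.symm (hs _)
        rw [hm] at ih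
        exact hr.trans ih step
  have hl := key (Fin.last n)
  rwa [hlast] at hl

end Chain

/-- If a class `C` of algebras closed under homomorphic images has definable principal
subcongruences (DPSC), then `C` has finitely determined syntactic congruences (FDSC). -/
theorem stmt_10 {L : Language} (C : (A : Type u) → [inst : L.Structure A] → Prop)
    (hC : ∀ (A B : Type u) [L.Structure A] [L.Structure B],
      C A → ∀ f : L.Hom A B, Function.Surjective f → C B)
    (hDPSC : ∃ P R : Set (CongFormula L), P.Finite ∧ R.Finite ∧
      ∀ (A : Type u) [L.Structure A], C A → ∀ a b : A, a ≠ b →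
        ∃ c d : A, c ≠ d ∧ (∃ π ∈ P, π.Sat c d a b) ∧
          ∀ e f : A, prinCon L c d e f ↔ ∃ ρ ∈ R, ρ.Sat e f c d) :
    ∃ F : Set (L.Term (ℕ ⊕ Fin 1)), F.Finite ∧
      ∀ (A : Type u) [L.Structure A], C A → ∀ θ : A → A → Prop, Equivalence θ →
        ∀ a b : A, synRel L θ a b ↔ relSub F θ a b := by
  classical
  obtain ⟨P, R, hPfin, hRfin, hdp⟩ := hDPSC
  refine ⟨⋃ ρ ∈ R, ⋃ π ∈ P, Set.image2 compTerm ρ.terms π.terms, ?_, ?_⟩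
  · exact hRfin.biUnion fun ρ _ => hPfin.biUnion fun π _ =>
      (Set.finite_range ρ.ts).image2 _ (Set.finite_range π.ts)
  intro A instA hCA θ hθ a b
  constructor
  · intro h t _ e
    exact h t e
  intro hab
  by_contra hna
  set δ := synRel L θ with hδdef
  have hδe : Equivalence δ := synRel_equiv hθ
  let B := Quot δ
  letI instB : L.Structure B :=
    { funMap := fun f x => Quot.mk δ (Structure.funMap f fun i => (x i).out)
      RelMap := fun _ _ => True }
  have hexact : ∀ x y : A, Quot.mk δ x = Quot.mk δ y → δ x y := fun x y h =>
    hδe.eqvGen_iff.mp (Quot.eq.mp h)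
  have hmkfun : ∀ {n : ℕ} (f : L.Functions n) (x : Fin n → A),
      Quot.mk δ (Structure.funMap f x) = Structure.funMap f fun i => Quot.mk δ (x i) := by
    intro n f x
    show _ = Quot.mk δ (Structure.funMap f fun i => (Quot.mk δ (x i)).out)
    exact Quot.sound (synRel_funMap hθ f _ _ fun i =>
      hδe.symm (hexact _ _ (Quot.out_eq (Quot.mk δ (x i)))))
  let g : A →[L] B :=
    { toFun := Quot.mk δ
      map_fun' := fun f x => hmkfun f x
      map_rel' := fun _ _ _ => trivial }
  have hCB : C B := hC A B hCA g fun q => ⟨q.out, Quot.out_eq q⟩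
  have hreal : ∀ (t : L.Term (ℕ ⊕ Fin 1)) (e : ℕ → A) (x : A),
      translation t (fun n => Quot.mk δ (e n)) (Quot.mk δ x) = Quot.mk δ (translation t e x) := by
    intro t e x
    have hv : (Sum.elim (fun n => Quot.mk δ (e n)) fun _ : Fin 1 => Quot.mk δ x)
        = (g : A → B) ∘ Sum.elim e fun _ => x := by
      funext v
      cases v <;> rfl
    simp only [translation, hv]
    exact HomClass.realize_term g
  have hne : Quot.mk δ a ≠ Quot.mk δ b := fun h => hna (hexact _ _ h)
  obtain ⟨cb, db, hcdne, ⟨π, hπP, eπB, hchainπ⟩, hRchar⟩ :=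
    hdp B hCB (Quot.mk δ a) (Quot.mk δ b) hne
  let eπ : ℕ → A := fun n => (eπB n).out
  have heπ : (fun n => Quot.mk δ (eπ n)) = eπB := funext fun n => Quot.out_eq _
  set c' := translation (π.ts 0) eπ (if π.zb 0 then b else a) with hc'def
  set d' := translation (π.ts (Fin.last π.n)) eπ (if π.zb (Fin.last π.n) then a else b) with hd'def
  have hifab : ∀ (z : Bool) (x y : A),
      (if z then Quot.mk δ x else Quot.mk δ y) = Quot.mk δ (if z then x else y) := by
    intro z x y
    cases z <;> rfl
  have hc' : Quot.mk δ c' = cb := by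
    rw [hchainπ.1, ← heπ, hifab, hreal]
  have hd' : Quot.mk δ d' = db := by
    rw [← hchainπ.2.2, ← heπ, hifab, hreal]
  have hswap : ∀ ρ ∈ R, ∀ (j : Fin (ρ.n + 1)) (w : ℕ → A),
      θ (translation (ρ.ts j) w c') (translation (ρ.ts j) w d') := by
    intro ρ hρR j w
    set r2 : B → B → Prop := fun p q => ∃ x y : A, Quot.mk δ x = p ∧ Quot.mk δ y = q ∧
      θ (translation (ρ.ts j) w x) (translation (ρ.ts j) w y) with hr2
    have hr2e : Equivalence r2 := by
      constructor
      · intro p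
        exact ⟨p.out, p.out, Quot.out_eq p, Quot.out_eq p, hθ.refl _⟩
      · rintro p q ⟨x, y, hx, hy, hxy⟩
        exact ⟨y, x, hy, hx, hθ.symm hxy⟩
      · rintro p q s ⟨x, y, hx, hy, hxy⟩ ⟨y2, z, hy2, hz, hyz⟩
        exact ⟨x, z, hx, hz, hθ.trans hxy
          (hθ.trans (hexact _ _ (hy2 ▸ hy) (ρ.ts j) w) hyz)⟩
    have hswaps : ∀ i, r2 (translation (π.ts i) eπB (Quot.mk δ a))
        (translation (π.ts i) eπB (Quot.mk δ b)) := by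
      intro i
      rw [← heπ, hreal, hreal]
      refine ⟨translation (π.ts i) eπ a, translation (π.ts i) eπ b, rfl, rfl, ?_⟩
      obtain ⟨ee, hee⟩ := comp_env (ρ.ts j) (π.ts i) w eπ
      rw [← hee a, ← hee b]
      refine hab _ ?_ ee
      exact Set.mem_biUnion hρR (Set.mem_biUnion hπP
        (Set.mem_image2_of_mem ⟨j, rfl⟩ ⟨i, rfl⟩))
    obtain ⟨x, y, hx, hy, hxy⟩ := chainSat_rel hchainπ hr2e hswaps
    have hxc : δ x c' := hexact _ _ (hx.trans hc'.symm)
    have hyd : δ y d' := hexact _ _ (hy.trans hd'.symm)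
    exact hθ.trans (hθ.symm (hxc (ρ.ts j) w)) (hθ.trans hxy (hyd (ρ.ts j) w))
  have hcd : δ c' d' := by
    intro t₀ e₀
    have hprin : prinCon L cb db (translation t₀ (fun n => Quot.mk δ (e₀ n)) cb)
        (translation t₀ (fun n => Quot.mk δ (e₀ n)) db) := fun r hr hrcd =>
      con_translation hr _ _ hrcd
    obtain ⟨ρ, hρR, wB, hchainρ⟩ := (hRchar _ _).mp hprin
    set r3 : B → B → Prop := fun p q => ∃ x y : A, Quot.mk δ x = p ∧ Quot.mk δ y = q ∧ θ x y
      with hr3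
    have hr3e : Equivalence r3 := by
      constructor
      · intro p
        exact ⟨p.out, p.out, Quot.out_eq p, Quot.out_eq p, hθ.refl _⟩
      · rintro p q ⟨x, y, hx, hy, hxy⟩
        exact ⟨y, x, hy, hx, hθ.symm hxy⟩
      · rintro p q s ⟨x, y, hx, hy, hxy⟩ ⟨y2, z, hy2, hz, hyz⟩
        exact ⟨x, z, hx, hz, hθ.trans hxy
          (hθ.trans (synRel_le (hexact _ _ (hy2 ▸ hy))) hyz)⟩
    let w' : ℕ → A := fun n => (wB n).out
    have hw' : (fun n => Quot.mk δ (w' n)) = wB := funext fun n => Quot.out_eq _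
    have hswaps3 : ∀ i, r3 (translation (ρ.ts i) wB cb) (translation (ρ.ts i) wB db) := by
      intro i
      rw [← hw', ← hc', ← hd', hreal, hreal]
      exact ⟨_, _, rfl, rfl, hswap ρ hρR i w'⟩
    obtain ⟨x, y, hx, hy, hxy⟩ := chainSat_rel hchainρ hr3e hswaps3
    have hu : translation t₀ (fun n => Quot.mk δ (e₀ n)) cb
        = Quot.mk δ (translation t₀ e₀ c') := by
      rw [← hc', hreal]
    have hv : translation t₀ (fun n => Quot.mk δ (e₀ n)) db
        = Quot.mk δ (translation t₀ e₀ d') := by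
      rw [← hd', hreal]
    have hxu : δ x (translation t₀ e₀ c') := hexact _ _ (hx.trans hu)
    have hyv : δ y (translation t₀ e₀ d') := hexact _ _ (hy.trans hv)
    exact hθ.trans (hθ.symm (synRel_le hxu)) (hθ.trans hxy (synRel_le hyv))
  exact hcdne (by rw [← hc', ← hd']; exact Quot.sound hcd)
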